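/- arXiv:2209.14634 — 8 statements merged into one kernel-verified Lean document; each statement's English description precedes it below -/
import Mathlib

section
/- For every λ > 0 and every β ∈ ℝ^d, Σ_{j=1}^N w_j (Σ_{ℓ=1}^d η_H(α_ℓ,λ) p_ℓ(x_j) − f(x_j))² + λ²·#{ℓ : η_H(α_ℓ,λ) ≠ 0} ≤ Σ_{j=1}^N w_j (Σ_{ℓ=1}^d β_ℓ p_ℓ(x_j) − f(x_j))² + λ²·#{ℓ : β_ℓ ≠ 0}; that is, the coefficient vector of the hard thresholding hyperinterpolation solves the weighted ℓ0-regularized least squares problem. -/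
open Finset

/-- The hard thresholding operator: `η_H(a,λ) = a` if `|a| > λ`, else `0`. -/
noncomputable def etaH (a lam : ℝ) : ℝ := if lam < |a| then a else 0

/-- termwise inequality for hard thresholding -/
lemma etaH_termwise (a b lam : ℝ) (hlam : 0 < lam) :
    (etaH a lam - a) ^ 2 + lam ^ 2 * (if etaH a lam ≠ 0 then (1:ℝ) else 0)
      ≤ (b - a) ^ 2 + lam ^ 2 * (if b ≠ 0 then (1:ℝ) else 0) := by
  unfold etaH
  by_cases h : lam < |a|
  · have ha : a ≠ 0 := by
      intro h0; rw [h0, abs_zero] at h; linarith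
    have hsq : lam ^ 2 < a ^ 2 := by
      have := sq_lt_sq' (by linarith [abs_nonneg a, neg_abs_le a]) h
      calc lam ^ 2 < |a| ^ 2 := this
        _ = a ^ 2 := sq_abs a
    by_cases hb : b = 0
    · subst hb
      simp only [h, if_true, ha, ne_eq, not_false_eq_true, if_true, if_false,
        not_true_eq_false, sub_self, zero_sub]
      nlinarith
    · simp only [h, if_true, ha, hb, ne_eq, not_false_eq_true, if_true]
      nlinarith [sq_nonneg (b - a)]
  · push_neg at h
    have ha2 : a ^ 2 ≤ lam ^ 2 := by
      calc a ^ 2 = |a| ^ 2 := (sq_abs a).symm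
        _ ≤ lam ^ 2 := by nlinarith [abs_nonneg a]
    by_cases hb : b = 0
    · subst hb
      simp [not_lt.mpr h]
    · simp only [not_lt.mpr h, if_false, ne_eq, not_true_eq_false, if_false,
        hb, not_false_eq_true, if_true, mul_zero, mul_one, add_zero]
      nlinarith [sq_nonneg (b - a)]

/-- the coefficient vector of hard thresholding hyperinterpolation solves
the weighted `ℓ0`-regularized least squares problem. -/
theorem HTH_solves_l0_least_squares {Ω : Type*} {N d : ℕ} (hN : 0 < N) (hd : 0 < d)
    (x : Fin N → Ω) (w : Fin N → ℝ) (hw : ∀ j, 0 < w j)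
    (p : Fin d → Ω → ℝ)
    (horth : ∀ i k : Fin d,
      ∑ j : Fin N, w j * p i (x j) * p k (x j) = if i = k then (1 : ℝ) else 0)
    (f : Ω → ℝ) (α : Fin d → ℝ)
    (hα : ∀ ℓ, α ℓ = ∑ j : Fin N, w j * f (x j) * p ℓ (x j))
    (lam : ℝ) (hlam : 0 < lam) (β : Fin d → ℝ) :
    ∑ j : Fin N, w j * (∑ ℓ : Fin d, etaH (α ℓ) lam * p ℓ (x j) - f (x j)) ^ 2
        + lam ^ 2 * ((Finset.univ.filter fun ℓ : Fin d => etaH (α ℓ) lam ≠ 0).card : ℝ)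
      ≤ ∑ j : Fin N, w j * (∑ ℓ : Fin d, β ℓ * p ℓ (x j) - f (x j)) ^ 2
        + lam ^ 2 * ((Finset.univ.filter fun ℓ : Fin d => β ℓ ≠ 0).card : ℝ) := by
  -- expansion lemma
  have key : ∀ c : Fin d → ℝ,
      ∑ j : Fin N, w j * (∑ ℓ : Fin d, c ℓ * p ℓ (x j) - f (x j)) ^ 2
        = (∑ ℓ : Fin d, (c ℓ - α ℓ) ^ 2)
          + (∑ j : Fin N, w j * f (x j) ^ 2 - ∑ ℓ : Fin d, (α ℓ) ^ 2) := by
    intro c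
    have h1 : ∑ j : Fin N, w j * (∑ ℓ : Fin d, c ℓ * p ℓ (x j)) ^ 2
        = ∑ ℓ : Fin d, (c ℓ) ^ 2 := by
      calc ∑ j : Fin N, w j * (∑ ℓ : Fin d, c ℓ * p ℓ (x j)) ^ 2
          = ∑ j : Fin N, ∑ ℓ : Fin d, ∑ k : Fin d,
              (c ℓ * c k) * (w j * p ℓ (x j) * p k (x j)) := by
            refine Finset.sum_congr rfl fun j _ => ?_
            rw [sq, Finset.sum_mul_sum, Finset.mul_sum]
            refine Finset.sum_congr rfl fun ℓ _ => ?_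
            rw [Finset.mul_sum]
            refine Finset.sum_congr rfl fun k _ => ?_
            ring
        _ = ∑ ℓ : Fin d, ∑ k : Fin d,
              (c ℓ * c k) * ∑ j : Fin N, w j * p ℓ (x j) * p k (x j) := by
            rw [Finset.sum_comm]
            refine Finset.sum_congr rfl fun ℓ _ => ?_
            rw [Finset.sum_comm]
            refine Finset.sum_congr rfl fun k _ => ?_
            rw [Finset.mul_sum]
        _ = ∑ ℓ : Fin d, (c ℓ) ^ 2 := by
            refine Finset.sum_congr rfl fun ℓ _ => ?_
            rw [Finset.sum_eq_single ℓ]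
            · rw [horth ℓ ℓ]; simp [sq]
            · intro k _ hk
              rw [horth ℓ k, if_neg (Ne.symm hk), mul_zero]
            · simp
    have h2 : ∑ j : Fin N, w j * (∑ ℓ : Fin d, c ℓ * p ℓ (x j)) * f (x j)
        = ∑ ℓ : Fin d, c ℓ * α ℓ := by
      calc ∑ j : Fin N, w j * (∑ ℓ : Fin d, c ℓ * p ℓ (x j)) * f (x j)
          = ∑ j : Fin N, ∑ ℓ : Fin d, c ℓ * (w j * f (x j) * p ℓ (x j)) := by
            refine Finset.sum_congr rfl fun j _ => ?_
            rw [Finset.mul_sum, Finset.sum_mul]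
            refine Finset.sum_congr rfl fun ℓ _ => ?_
            ring
        _ = ∑ ℓ : Fin d, c ℓ * ∑ j : Fin N, w j * f (x j) * p ℓ (x j) := by
            rw [Finset.sum_comm]
            refine Finset.sum_congr rfl fun ℓ _ => ?_
            rw [Finset.mul_sum]
        _ = ∑ ℓ : Fin d, c ℓ * α ℓ := by
            refine Finset.sum_congr rfl fun ℓ _ => ?_
            rw [hα ℓ]
    have expand : ∑ j : Fin N, w j * (∑ ℓ : Fin d, c ℓ * p ℓ (x j) - f (x j)) ^ 2
        = ∑ j : Fin N, w j * (∑ ℓ : Fin d, c ℓ * p ℓ (x j)) ^ 2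
          - 2 * ∑ j : Fin N, w j * (∑ ℓ : Fin d, c ℓ * p ℓ (x j)) * f (x j)
          + ∑ j : Fin N, w j * f (x j) ^ 2 := by
      rw [Finset.mul_sum, ← Finset.sum_sub_distrib, ← Finset.sum_add_distrib]
      refine Finset.sum_congr rfl fun j _ => ?_
      ring
    rw [expand, h1, h2]
    have : ∑ ℓ : Fin d, (c ℓ - α ℓ) ^ 2
        = ∑ ℓ : Fin d, (c ℓ) ^ 2 - 2 * ∑ ℓ : Fin d, c ℓ * α ℓ + ∑ ℓ : Fin d, (α ℓ) ^ 2 := by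
      rw [Finset.mul_sum, ← Finset.sum_sub_distrib, ← Finset.sum_add_distrib]
      refine Finset.sum_congr rfl fun ℓ _ => ?_
      ring
    rw [this]; ring
  have card_eq : ∀ c : Fin d → ℝ,
      ((Finset.univ.filter fun ℓ : Fin d => c ℓ ≠ 0).card : ℝ)
        = ∑ ℓ : Fin d, (if c ℓ ≠ 0 then (1:ℝ) else 0) := by
    intro c
    rw [Finset.sum_boole]
  rw [key, key, card_eq, card_eq]
  have main : ∑ ℓ : Fin d, ((etaH (α ℓ) lam - α ℓ) ^ 2
        + lam ^ 2 * (if etaH (α ℓ) lam ≠ 0 then (1:ℝ) else 0))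
      ≤ ∑ ℓ : Fin d, ((β ℓ - α ℓ) ^ 2
        + lam ^ 2 * (if β ℓ ≠ 0 then (1:ℝ) else 0)) :=
    Finset.sum_le_sum fun ℓ _ => etaH_termwise (α ℓ) (β ℓ) lam hlam
  rw [Finset.sum_add_distrib, Finset.sum_add_distrib] at main
  rw [Finset.mul_sum, Finset.mul_sum]
  linarith
end

section
/- Hard thresholding hyperinterpolation is idempotent: for every λ > 0 and every f : Ω → ℝ, H_L^λ(H_L^λ f) = H_L^λ f as functions on Ω. -/
open Finset

/-- The hyperinterpolation coefficients `α_ℓ = ∑_j w_j f(x_j) p_ℓ(x_j)`. -/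
noncomputable def hyperCoeff {Ω : Type*} {N d : ℕ} (x : Fin N → Ω) (w : Fin N → ℝ)
    (p : Fin d → Ω → ℝ) (f : Ω → ℝ) (ℓ : Fin d) : ℝ :=
  ∑ j : Fin N, w j * f (x j) * p ℓ (x j)

/-- The hyperinterpolation `L_L f = ∑_ℓ α_ℓ p_ℓ`. -/
noncomputable def hyper {Ω : Type*} {N d : ℕ} (x : Fin N → Ω) (w : Fin N → ℝ)
    (p : Fin d → Ω → ℝ) (f : Ω → ℝ) : Ω → ℝ :=
  fun y => ∑ ℓ : Fin d, hyperCoeff x w p f ℓ * p ℓ y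

/-- The hard thresholding hyperinterpolation `H_L^λ f = ∑_ℓ η_H(α_ℓ,λ) p_ℓ`. -/
noncomputable def HTH {Ω : Type*} {N d : ℕ} (x : Fin N → Ω) (w : Fin N → ℝ)
    (p : Fin d → Ω → ℝ) (lam : ℝ) (f : Ω → ℝ) : Ω → ℝ :=
  fun y => ∑ ℓ : Fin d, etaH (hyperCoeff x w p f ℓ) lam * p ℓ y

/-- hard thresholding hyperinterpolation is idempotent. -/
theorem HTH_idempotent {Ω : Type*} {N d : ℕ} (hN : 0 < N) (hd : 0 < d)
    (x : Fin N → Ω) (w : Fin N → ℝ) (hw : ∀ j, 0 < w j)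
    (p : Fin d → Ω → ℝ)
    (horth : ∀ i k : Fin d,
      ∑ j : Fin N, w j * p i (x j) * p k (x j) = if i = k then (1 : ℝ) else 0)
    (lam : ℝ) (hlam : 0 < lam) (f : Ω → ℝ) :
    HTH x w p lam (HTH x w p lam f) = HTH x w p lam f := by
  have hcoeff : ∀ ℓ : Fin d,
      hyperCoeff x w p (HTH x w p lam f) ℓ = etaH (hyperCoeff x w p f ℓ) lam := by
    intro ℓ
    show ∑ j : Fin N, w j * (∑ k : Fin d, etaH (hyperCoeff x w p f k) lam * p k (x j)) * p ℓ (x j)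
        = etaH (hyperCoeff x w p f ℓ) lam
    have h1 : ∀ j : Fin N,
        w j * (∑ k : Fin d, etaH (hyperCoeff x w p f k) lam * p k (x j)) * p ℓ (x j)
        = ∑ k : Fin d, etaH (hyperCoeff x w p f k) lam * (w j * p k (x j) * p ℓ (x j)) := by
      intro j
      rw [mul_comm (w j), Finset.sum_mul, Finset.sum_mul]
      exact Finset.sum_congr rfl (fun k _ => by ring)
    simp_rw [h1]
    rw [Finset.sum_comm]
    have h2 : ∀ k : Fin d,
        ∑ j : Fin N, etaH (hyperCoeff x w p f k) lam * (w j * p k (x j) * p ℓ (x j))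
        = etaH (hyperCoeff x w p f k) lam * (if k = ℓ then (1:ℝ) else 0) := by
      intro k
      rw [← Finset.mul_sum, horth k ℓ]
    simp_rw [h2]
    simp
  funext y
  show (∑ ℓ : Fin d, etaH (hyperCoeff x w p (HTH x w p lam f) ℓ) lam * p ℓ y)
      = ∑ ℓ : Fin d, etaH (hyperCoeff x w p f ℓ) lam * p ℓ y
  refine Finset.sum_congr rfl (fun ℓ _ => ?_)
  rw [hcoeff ℓ]
  congr 1
  unfold etaH
  split_ifs with h1 h2 h2 <;> first | rfl | simp_all | linarith
end

section
/- Hard thresholding hyperinterpolation commutes with hyperinterpolation and absorbs it: for every λ > 0 and every f : Ω → ℝ, H_L^λ(L_L f) = H_L^λ f and L_L(H_L^λ f) = H_L^λ f as functions on Ω. -/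
open Finset

lemma coeff_of_sum {Ω : Type*} {N d : ℕ} (x : Fin N → Ω) (w : Fin N → ℝ)
    (p : Fin d → Ω → ℝ)
    (horth : ∀ i k : Fin d,
      ∑ j : Fin N, w j * p i (x j) * p k (x j) = if i = k then (1 : ℝ) else 0)
    (c : Fin d → ℝ) (ℓ : Fin d) :
    hyperCoeff x w p (fun y => ∑ k : Fin d, c k * p k y) ℓ = c ℓ := by
  unfold hyperCoeff
  have : ∀ j : Fin N, w j * (∑ k : Fin d, c k * p k (x j)) * p ℓ (x j)
      = ∑ k : Fin d, c k * (w j * p k (x j) * p ℓ (x j)) := by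
    intro j
    rw [Finset.mul_sum, Finset.sum_mul]
    exact Finset.sum_congr rfl fun k _ => by ring
  simp_rw [this]
  rw [Finset.sum_comm]
  have : ∀ k : Fin d, ∑ j : Fin N, c k * (w j * p k (x j) * p ℓ (x j))
      = c k * (if k = ℓ then (1:ℝ) else 0) := by
    intro k
    rw [← Finset.mul_sum, horth k ℓ]
  simp_rw [this]
  simp

/-- hard thresholding hyperinterpolation commutes with hyperinterpolation
and absorbs it: `H_L^λ(L_L f) = H_L^λ f` and `L_L(H_L^λ f) = H_L^λ f`. -/
theorem HTH_hyper_commute {Ω : Type*} {N d : ℕ} (hN : 0 < N) (hd : 0 < d)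
    (x : Fin N → Ω) (w : Fin N → ℝ) (hw : ∀ j, 0 < w j)
    (p : Fin d → Ω → ℝ)
    (horth : ∀ i k : Fin d,
      ∑ j : Fin N, w j * p i (x j) * p k (x j) = if i = k then (1 : ℝ) else 0)
    (lam : ℝ) (hlam : 0 < lam) (f : Ω → ℝ) :
    HTH x w p lam (hyper x w p f) = HTH x w p lam f ∧
      hyper x w p (HTH x w p lam f) = HTH x w p lam f := by
  have h1 : ∀ ℓ, hyperCoeff x w p (hyper x w p f) ℓ = hyperCoeff x w p f ℓ := by
    intro ℓ; exact coeff_of_sum x w p horth _ ℓ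
  have h2 : ∀ ℓ, hyperCoeff x w p (HTH x w p lam f) ℓ = etaH (hyperCoeff x w p f ℓ) lam := by
    intro ℓ; exact coeff_of_sum x w p horth _ ℓ
  constructor
  · funext y; unfold HTH; simp_rw [h1]
  · funext y; unfold hyper; simp_rw [h2]; rfl
end

section
/- The residual of hard thresholding hyperinterpolation is orthogonal to it in the discrete inner product: for every λ ≥ 0 and every f : Ω → ℝ, ⟨f − H_L^λ f, H_L^λ f⟩_N = 0. -/
open Finset

/-- The discrete inner product `⟨v,z⟩_N = ∑_j w_j v(x_j) z(x_j)`. -/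
noncomputable def dip {Ω : Type*} {N : ℕ} (x : Fin N → Ω) (w : Fin N → ℝ)
    (v z : Ω → ℝ) : ℝ :=
  ∑ j : Fin N, w j * v (x j) * z (x j)

/-- the residual of hard thresholding hyperinterpolation is orthogonal to
it in the discrete inner product. -/
theorem HTH_residual_orthogonal {Ω : Type*} {N d : ℕ} (hN : 0 < N) (hd : 0 < d)
    (x : Fin N → Ω) (w : Fin N → ℝ) (hw : ∀ j, 0 < w j)
    (p : Fin d → Ω → ℝ)
    (horth : ∀ i k : Fin d,
      ∑ j : Fin N, w j * p i (x j) * p k (x j) = if i = k then (1 : ℝ) else 0)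
    (lam : ℝ) (hlam : 0 ≤ lam) (f : Ω → ℝ) :
    dip x w (fun y => f y - HTH x w p lam f y) (HTH x w p lam f) = 0 := by
  classical
  set η : Fin d → ℝ := fun ℓ => etaH (hyperCoeff x w p f ℓ) lam with hη
  have inner : ∀ ℓ : Fin d,
      ∑ j : Fin N, w j * (f (x j) - HTH x w p lam f (x j)) * p ℓ (x j)
        = hyperCoeff x w p f ℓ - η ℓ := by
    intro ℓ
    have key : ∀ j : Fin N, w j * (f (x j) - HTH x w p lam f (x j)) * p ℓ (x j)
        = w j * f (x j) * p ℓ (x j) - ∑ k : Fin d, η k * (w j * p k (x j) * p ℓ (x j)) := by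
      intro j
      show w j * (f (x j) - ∑ k : Fin d, η k * p k (x j)) * p ℓ (x j) = _
      rw [mul_sub, Finset.mul_sum, sub_mul, Finset.sum_mul]
      congr 1
      exact Finset.sum_congr rfl fun k _ => by ring
    rw [Finset.sum_congr rfl fun j _ => key j, Finset.sum_sub_distrib]
    congr 1
    rw [Finset.sum_comm]
    have : ∀ k : Fin d, ∑ j : Fin N, η k * (w j * p k (x j) * p ℓ (x j))
        = η k * (if k = ℓ then (1:ℝ) else 0) := fun k => by
      rw [← Finset.mul_sum, horth k ℓ]
    rw [Finset.sum_congr rfl fun k _ => this k]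
    simp only [mul_ite, mul_one, mul_zero, Finset.sum_ite_eq', Finset.mem_univ, if_true]
  have gen : ∀ (A : ℝ) (c q : Fin d → ℝ),
      A * (∑ ℓ : Fin d, c ℓ * q ℓ) = ∑ ℓ : Fin d, c ℓ * (A * q ℓ) := by
    intro A c q
    rw [Finset.mul_sum]
    exact Finset.sum_congr rfl fun ℓ _ => by ring
  have expand : dip x w (fun y => f y - HTH x w p lam f y) (HTH x w p lam f)
      = ∑ ℓ : Fin d, η ℓ * (hyperCoeff x w p f ℓ - η ℓ) := by
    unfold dip
    have step : ∀ j : Fin N,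
        w j * (f (x j) - HTH x w p lam f (x j)) * HTH x w p lam f (x j)
        = ∑ ℓ : Fin d, η ℓ * (w j * (f (x j) - HTH x w p lam f (x j)) * p ℓ (x j)) :=
      fun j => gen _ η (fun ℓ => p ℓ (x j))
    rw [Finset.sum_congr rfl fun j _ => step j, Finset.sum_comm]
    exact Finset.sum_congr rfl fun ℓ _ => by rw [← Finset.mul_sum, inner ℓ]
  rw [expand]
  apply Finset.sum_eq_zero
  intro ℓ _
  simp only [hη, etaH]
  by_cases h : lam < |hyperCoeff x w p f ℓ| <;> simp [h]
end

section
/- A discrete Pythagorean identity holds for hard thresholding hyperinterpolation: for every λ ≥ 0 and every f : Ω → ℝ, ⟨H_L^λ f, H_L^λ f⟩_N + ⟨f − H_L^λ f, f − H_L^λ f⟩_N = ⟨f, f⟩_N. -/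
open Finset

/-- discrete Pythagorean identity for hard thresholding
hyperinterpolation. -/
theorem HTH_pythagorean {Ω : Type*} {N d : ℕ} (hN : 0 < N) (hd : 0 < d)
    (x : Fin N → Ω) (w : Fin N → ℝ) (hw : ∀ j, 0 < w j)
    (p : Fin d → Ω → ℝ)
    (horth : ∀ i k : Fin d,
      ∑ j : Fin N, w j * p i (x j) * p k (x j) = if i = k then (1 : ℝ) else 0)
    (lam : ℝ) (hlam : 0 ≤ lam) (f : Ω → ℝ) :
    dip x w (HTH x w p lam f) (HTH x w p lam f)
        + dip x w (fun y => f y - HTH x w p lam f y) (fun y => f y - HTH x w p lam f y)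
      = dip x w f f := by
  set β : Fin d → ℝ := fun ℓ => etaH (hyperCoeff x w p f ℓ) lam with hβ
  have hC : dip x w (HTH x w p lam f) (HTH x w p lam f) = ∑ i : Fin d, β i * β i := by
    have : dip x w (HTH x w p lam f) (HTH x w p lam f)
        = ∑ i : Fin d, ∑ k : Fin d, β i * β k * (∑ j : Fin N, w j * p i (x j) * p k (x j)) := by
      simp only [dip, HTH, Finset.mul_sum, Finset.sum_mul, ← hβ]
      rw [Finset.sum_comm]
      refine Finset.sum_congr rfl fun i _ => ?_
      rw [Finset.sum_comm]
      refine Finset.sum_congr rfl fun k _ => Finset.sum_congr rfl fun j _ => by ring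
    rw [this]
    refine Finset.sum_congr rfl fun i _ => ?_
    rw [Finset.sum_eq_single i]
    · simp [horth i i]
    · intro k _ hk; simp [horth i k, (Ne.symm hk : i ≠ k)]
    · simp
  have hA : dip x w f (HTH x w p lam f) = ∑ i : Fin d, β i * hyperCoeff x w p f i := by
    simp only [dip, HTH, Finset.mul_sum, ← hβ]
    rw [Finset.sum_comm]
    refine Finset.sum_congr rfl fun i _ => ?_
    simp only [hβ, hyperCoeff, Finset.mul_sum]
    refine Finset.sum_congr rfl fun j _ => by ring
  have hβα : ∀ i, β i * β i = β i * hyperCoeff x w p f i := by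
    intro i
    simp only [hβ, etaH]
    split <;> simp
  have hCA : dip x w (HTH x w p lam f) (HTH x w p lam f) = dip x w f (HTH x w p lam f) := by
    rw [hC, hA]; exact Finset.sum_congr rfl fun i _ => hβα i
  have hexp : dip x w (fun y => f y - HTH x w p lam f y) (fun y => f y - HTH x w p lam f y)
      = dip x w f f - 2 * dip x w f (HTH x w p lam f)
        + dip x w (HTH x w p lam f) (HTH x w p lam f) := by
    simp only [dip, Finset.mul_sum, ← Finset.sum_sub_distrib, ← Finset.sum_add_distrib]
    exact Finset.sum_congr rfl fun j _ => by ring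
  rw [hexp, hCA]; ring
end

section
/- Hard thresholding hyperinterpolation is a contraction in the discrete inner product: for every λ ≥ 0 and every f : Ω → ℝ, ⟨H_L^λ f, H_L^λ f⟩_N ≤ ⟨f, f⟩_N. -/
open Finset

/-- hard thresholding hyperinterpolation is a contraction in the discrete
inner product. -/
theorem HTH_contraction {Ω : Type*} {N d : ℕ} (hN : 0 < N) (hd : 0 < d)
    (x : Fin N → Ω) (w : Fin N → ℝ) (hw : ∀ j, 0 < w j)
    (p : Fin d → Ω → ℝ)
    (horth : ∀ i k : Fin d,
      ∑ j : Fin N, w j * p i (x j) * p k (x j) = if i = k then (1 : ℝ) else 0)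
    (lam : ℝ) (hlam : 0 ≤ lam) (f : Ω → ℝ) :
    dip x w (HTH x w p lam f) (HTH x w p lam f) ≤ dip x w f f := by
  classical
  set α := hyperCoeff x w p f with hα
  have bil : ∀ c c' : Fin d → ℝ,
      (∑ j : Fin N, w j * (∑ ℓ : Fin d, c ℓ * p ℓ (x j)) * (∑ m : Fin d, c' m * p m (x j)))
        = ∑ ℓ : Fin d, c ℓ * c' ℓ := by
    intro c c'
    have h1 : ∀ j : Fin N, w j * (∑ ℓ : Fin d, c ℓ * p ℓ (x j)) * (∑ m : Fin d, c' m * p m (x j))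
        = ∑ ℓ : Fin d, ∑ m : Fin d, c ℓ * c' m * (w j * p ℓ (x j) * p m (x j)) := by
      intro j
      rw [Finset.sum_comm, Finset.mul_sum]
      refine Finset.sum_congr rfl fun m _ => ?_
      rw [Finset.mul_sum, Finset.sum_mul]
      exact Finset.sum_congr rfl fun ℓ _ => by ring
    calc (∑ j : Fin N, w j * (∑ ℓ : Fin d, c ℓ * p ℓ (x j)) * (∑ m : Fin d, c' m * p m (x j)))
        = ∑ j : Fin N, ∑ ℓ : Fin d, ∑ m : Fin d, c ℓ * c' m * (w j * p ℓ (x j) * p m (x j)) :=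
          Finset.sum_congr rfl fun j _ => h1 j
      _ = ∑ ℓ : Fin d, ∑ m : Fin d, c ℓ * c' m * ∑ j : Fin N, w j * p ℓ (x j) * p m (x j) := by
          rw [Finset.sum_comm]
          refine Finset.sum_congr rfl fun ℓ _ => ?_
          rw [Finset.sum_comm]
          exact Finset.sum_congr rfl fun m _ => by rw [Finset.mul_sum]
      _ = ∑ ℓ : Fin d, c ℓ * c' ℓ := by
          refine Finset.sum_congr rfl fun ℓ _ => ?_
          simp [horth, mul_ite]
  have cross : ∀ c : Fin d → ℝ,
      (∑ j : Fin N, w j * f (x j) * (∑ ℓ : Fin d, c ℓ * p ℓ (x j)))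
        = ∑ ℓ : Fin d, c ℓ * α ℓ := by
    intro c
    simp only [Finset.mul_sum]
    rw [Finset.sum_comm]
    refine Finset.sum_congr rfl fun ℓ _ => ?_
    rw [hα, hyperCoeff, Finset.mul_sum]
    exact Finset.sum_congr rfl fun j _ => by ring
  -- Bessel: ∑ α² ≤ dip f f
  have bessel : (∑ ℓ : Fin d, α ℓ * α ℓ) ≤ dip x w f f := by
    have h0 : 0 ≤ ∑ j : Fin N, w j * (f (x j) - ∑ ℓ : Fin d, α ℓ * p ℓ (x j)) ^ 2 :=
      Finset.sum_nonneg fun j _ => mul_nonneg (hw j).le (sq_nonneg _)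
    have hexp : (∑ j : Fin N, w j * (f (x j) - ∑ ℓ : Fin d, α ℓ * p ℓ (x j)) ^ 2)
        = dip x w f f
          - 2 * (∑ j : Fin N, w j * f (x j) * (∑ ℓ : Fin d, α ℓ * p ℓ (x j)))
          + (∑ j : Fin N, w j * (∑ ℓ : Fin d, α ℓ * p ℓ (x j)) * (∑ m : Fin d, α m * p m (x j))) := by
      rw [dip, Finset.mul_sum, ← Finset.sum_sub_distrib, ← Finset.sum_add_distrib]
      exact Finset.sum_congr rfl fun j _ => by ring
    rw [hexp, cross, bil] at h0
    linarith
  have hH : dip x w (HTH x w p lam f) (HTH x w p lam f)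
      = ∑ ℓ : Fin d, etaH (α ℓ) lam * etaH (α ℓ) lam := by
    rw [dip]
    exact bil (fun ℓ => etaH (α ℓ) lam) (fun ℓ => etaH (α ℓ) lam)
  have hle : (∑ ℓ : Fin d, etaH (α ℓ) lam * etaH (α ℓ) lam) ≤ ∑ ℓ : Fin d, α ℓ * α ℓ := by
    refine Finset.sum_le_sum fun ℓ _ => ?_
    unfold etaH
    split
    · exact le_refl _
    · simpa using mul_self_nonneg (α ℓ)
  rw [hH]
  exact hle.trans bessel
end

section
/- Stability of hard thresholding hyperinterpolation: for every λ ≥ 0 and every bounded measurable f : Ω → ℝ, ‖H_L^λ f‖₂ ≤ V^{1/2} ‖f‖_∞. -/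
open Finset MeasureTheory

/-- The `L²(μ)` norm `‖g‖₂ = (∫ g² dμ)^{1/2}`. -/
noncomputable def norm2 {Ω : Type*} [MeasurableSpace Ω] (μ : Measure Ω) (g : Ω → ℝ) : ℝ :=
  Real.sqrt (∫ y, g y ^ 2 ∂μ)

/-- The uniform norm `‖g‖_∞ = sup_{x ∈ Ω} |g(x)|`. -/
noncomputable def normInf {Ω : Type*} (g : Ω → ℝ) : ℝ := ⨆ y, |g y|

/-- stability of hard thresholding hyperinterpolation,
`‖H_L^λ f‖₂ ≤ V^{1/2} ‖f‖_∞`. -/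
theorem HTH_stability {Ω : Type*} [MeasurableSpace Ω] (μ : Measure Ω) [IsFiniteMeasure μ]
    {N d : ℕ} (hN : 0 < N) (hd : 0 < d)
    (x : Fin N → Ω) (w : Fin N → ℝ) (hw : ∀ j, 0 < w j)
    (hV : ∑ j : Fin N, w j = (μ Set.univ).toReal)
    (p : Fin d → Ω → ℝ) (hpm : ∀ ℓ, Measurable (p ℓ))
    (hL2 : ∀ i k : Fin d, ∫ y, p i y * p k y ∂μ = if i = k then (1 : ℝ) else 0)
    (hdisc : ∀ i k : Fin d,
      ∑ j : Fin N, w j * p i (x j) * p k (x j) = if i = k then (1 : ℝ) else 0)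
    (f : Ω → ℝ) (hfm : Measurable f) (hfb : ∃ M, ∀ y, |f y| ≤ M)
    (lam : ℝ) (hlam : 0 ≤ lam) :
    norm2 μ (HTH x w p lam f) ≤ Real.sqrt ((μ Set.univ).toReal) * normInf f := by
  classical
  obtain ⟨M, hM⟩ := hfb
  set α : Fin d → ℝ := hyperCoeff x w p f with hα
  set c : Fin d → ℝ := fun ℓ => etaH (α ℓ) lam with hc
  -- integrability of products
  have hint2 : ∀ i : Fin d, Integrable (fun y => p i y * p i y) μ := by
    intro i
    by_contra h
    have h0 := integral_undef h
    rw [hL2 i i] at h0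
    simp at h0
  have hint : ∀ i k : Fin d, Integrable (fun y => p i y * p k y) μ := by
    intro i k
    refine Integrable.mono ((hint2 i).add (hint2 k))
      (((hpm i).mul (hpm k)).aestronglyMeasurable) ?_
    filter_upwards with y
    have h1 : (0:ℝ) ≤ p i y * p i y + p k y * p k y := by nlinarith [sq_nonneg (p i y), sq_nonneg (p k y)]
    simp only [Pi.add_apply]
    rw [Real.norm_eq_abs, Real.norm_eq_abs, abs_of_nonneg h1, abs_mul]
    nlinarith [sq_nonneg (|p i y| - |p k y|), abs_nonneg (p i y), abs_nonneg (p k y),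
      sq_abs (p i y), sq_abs (p k y)]
  -- L² norm of HTH
  have hHsq : (∫ y, (HTH x w p lam f y) ^ 2 ∂μ) = ∑ ℓ : Fin d, (c ℓ) ^ 2 := by
    have hexp : ∀ y, (HTH x w p lam f y) ^ 2
        = ∑ ℓ : Fin d, ∑ k : Fin d, (c ℓ * c k) * (p ℓ y * p k y) := by
      intro y
      simp only [HTH, sq, Finset.sum_mul_sum]
      congr 1; ext ℓ; congr 1; ext k; ring
    simp only [hexp]
    rw [integral_finset_sum _ (fun ℓ _ => integrable_finset_sum _
      (fun k _ => ((hint ℓ k).const_mul _)))]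
    have : ∀ ℓ : Fin d, (∫ y, ∑ k : Fin d, (c ℓ * c k) * (p ℓ y * p k y) ∂μ)
        = (c ℓ)^2 := by
      intro ℓ
      rw [integral_finset_sum _ (fun k _ => ((hint ℓ k).const_mul _))]
      have : ∀ k : Fin d, (∫ y, (c ℓ * c k) * (p ℓ y * p k y) ∂μ)
          = if ℓ = k then c ℓ * c k else 0 := by
        intro k
        rw [MeasureTheory.integral_const_mul, hL2 ℓ k]
        split <;> simp
      simp only [this, Finset.sum_ite_eq, Finset.mem_univ, if_true, sq]
    simp only [this]
  -- thresholding shrinks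
  have hshrink : ∀ ℓ, (c ℓ)^2 ≤ (α ℓ)^2 := by
    intro ℓ
    simp only [hc, etaH]
    split
    · exact le_rfl
    · simpa using sq_nonneg (α ℓ)
  -- discrete Bessel inequality
  have hA : ∑ j : Fin N, w j * f (x j) * (∑ ℓ : Fin d, α ℓ * p ℓ (x j))
      = ∑ ℓ : Fin d, (α ℓ)^2 := by
    simp only [Finset.mul_sum]
    rw [Finset.sum_comm]
    refine Finset.sum_congr rfl (fun ℓ _ => ?_)
    have : ∑ j : Fin N, w j * f (x j) * (α ℓ * p ℓ (x j))
        = α ℓ * ∑ j : Fin N, w j * f (x j) * p ℓ (x j) := by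
      rw [Finset.mul_sum]; exact Finset.sum_congr rfl (fun j _ => by ring)
    rw [this]
    have : α ℓ = ∑ j : Fin N, w j * f (x j) * p ℓ (x j) := rfl
    rw [← this, sq]
  have hB : ∑ j : Fin N, w j * (∑ ℓ : Fin d, α ℓ * p ℓ (x j))^2
      = ∑ ℓ : Fin d, (α ℓ)^2 := by
    have hexp : ∀ j : Fin N, w j * (∑ ℓ : Fin d, α ℓ * p ℓ (x j))^2
        = ∑ ℓ : Fin d, ∑ k : Fin d, (α ℓ * α k) * (w j * p ℓ (x j) * p k (x j)) := by
      intro j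
      rw [sq, Finset.sum_mul_sum, Finset.mul_sum]
      refine Finset.sum_congr rfl (fun ℓ _ => ?_)
      rw [Finset.mul_sum]
      exact Finset.sum_congr rfl (fun k _ => by ring)
    simp only [hexp]
    rw [Finset.sum_comm]
    refine Finset.sum_congr rfl (fun ℓ _ => ?_)
    rw [Finset.sum_comm]
    have : ∀ k : Fin d, ∑ j : Fin N, (α ℓ * α k) * (w j * p ℓ (x j) * p k (x j))
        = if ℓ = k then α ℓ * α k else 0 := by
      intro k
      rw [← Finset.mul_sum, hdisc ℓ k]
      split <;> simp
    simp only [this, Finset.sum_ite_eq, Finset.mem_univ, if_true, sq]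
  have hBessel : ∑ ℓ : Fin d, (α ℓ)^2 ≤ ∑ j : Fin N, w j * f (x j)^2 := by
    have hnn : 0 ≤ ∑ j : Fin N, w j * (f (x j) - ∑ ℓ : Fin d, α ℓ * p ℓ (x j))^2 :=
      Finset.sum_nonneg (fun j _ => mul_nonneg (hw j).le (sq_nonneg _))
    have hexpand : ∑ j : Fin N, w j * (f (x j) - ∑ ℓ : Fin d, α ℓ * p ℓ (x j))^2
        = ∑ j : Fin N, w j * f (x j)^2
          - 2 * ∑ j : Fin N, w j * f (x j) * (∑ ℓ : Fin d, α ℓ * p ℓ (x j))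
          + ∑ j : Fin N, w j * (∑ ℓ : Fin d, α ℓ * p ℓ (x j))^2 := by
      calc ∑ j : Fin N, w j * (f (x j) - ∑ ℓ : Fin d, α ℓ * p ℓ (x j))^2
          = ∑ j : Fin N, (w j * f (x j)^2
              - 2 * (w j * f (x j) * (∑ ℓ : Fin d, α ℓ * p ℓ (x j)))
              + w j * (∑ ℓ : Fin d, α ℓ * p ℓ (x j))^2) :=
            Finset.sum_congr rfl (fun j _ => by ring)
        _ = _ := by
            rw [Finset.sum_add_distrib, Finset.sum_sub_distrib, ← Finset.mul_sum]
    rw [hexpand, hA, hB] at hnn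
    linarith
  -- sup norm bound
  have : Nonempty Ω := ⟨x ⟨0, hN⟩⟩
  have hbdd : BddAbove (Set.range fun y => |f y|) := ⟨M, by rintro _ ⟨y, rfl⟩; exact hM y⟩
  have hInf_le : ∀ y, |f y| ≤ normInf f := fun y => le_ciSup hbdd y
  have hInf_nn : 0 ≤ normInf f := le_trans (abs_nonneg _) (hInf_le Classical.ofNonempty)
  have hfin : ∑ j : Fin N, w j * f (x j)^2 ≤ (μ Set.univ).toReal * (normInf f)^2 := by
    rw [← hV, Finset.sum_mul]
    refine Finset.sum_le_sum (fun j _ => ?_)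
    have h1 : f (x j)^2 ≤ (normInf f)^2 := by
      rw [← sq_abs (f (x j))]
      exact pow_le_pow_left₀ (abs_nonneg _) (hInf_le (x j)) 2
    exact mul_le_mul_of_nonneg_left h1 (hw j).le
  -- conclude
  have hchain : (∫ y, (HTH x w p lam f y) ^ 2 ∂μ) ≤ (μ Set.univ).toReal * (normInf f)^2 := by
    rw [hHsq]
    exact le_trans (Finset.sum_le_sum (fun ℓ _ => hshrink ℓ)) (le_trans hBessel hfin)
  have := Real.sqrt_le_sqrt hchain
  rw [norm2]
  calc Real.sqrt (∫ y, (HTH x w p lam f y) ^ 2 ∂μ)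
      ≤ Real.sqrt ((μ Set.univ).toReal * (normInf f)^2) := this
    _ = Real.sqrt ((μ Set.univ).toReal) * normInf f := by
        rw [Real.sqrt_mul ENNReal.toReal_nonneg, Real.sqrt_sq hInf_nn]
end

section
/- Comparison of L₂ norms: for every λ ≥ 0 and every bounded measurable f : Ω → ℝ, ‖L_L^{λ,S} f‖₂ ≤ ‖H_L^λ f‖₂ ≤ ‖L_L f‖₂, where L_L^{λ,S} is the Lasso hyperinterpolation with all penalty parameters equal to 1; moreover, when λ = 0 both inequalities are equalities. -/
open Finset MeasureTheory

/-- The soft thresholding operator `η_S(a,k) = max(0, a−k) + min(0, a+k)`. -/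
noncomputable def etaS (a k : ℝ) : ℝ := max 0 (a - k) + min 0 (a + k)

/-- The Lasso hyperinterpolation with unit penalty parameters,
`L_L^{λ,S} f = ∑_ℓ η_S(α_ℓ,λ) p_ℓ`. -/
noncomputable def lassoHyper {Ω : Type*} {N d : ℕ} (x : Fin N → Ω) (w : Fin N → ℝ)
    (p : Fin d → Ω → ℝ) (lam : ℝ) (f : Ω → ℝ) : Ω → ℝ :=
  fun y => ∑ ℓ : Fin d, etaS (hyperCoeff x w p f ℓ) lam * p ℓ y

/-!
By orthonormality of the `p_ℓ` (Parseval), `‖∑ c_ℓ p_ℓ‖₂² = ∑ c_ℓ²`, so the `L²` norms of the three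
approximations are the Euclidean norms of their coefficient vectors `η_S(α_ℓ, λ)`, `η_H(α_ℓ, λ)`
and `α_ℓ`. For `λ ≥ 0` these satisfy `|η_S(a, λ)| ≤ |η_H(a, λ)| ≤ |a|` coordinatewise, and both
thresholdings are the identity at `λ = 0`.
-/

lemma abs_etaH_le (a lam : ℝ) : |etaH a lam| ≤ |a| := by
  unfold etaH
  split_ifs <;> simp

lemma abs_etaS_le_abs_etaH (a : ℝ) {lam : ℝ} (hlam : 0 ≤ lam) : |etaS a lam| ≤ |etaH a lam| := by
  unfold etaS etaH
  split_ifs with h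
  · rcases le_total 0 a with ha | ha
    · rw [abs_of_nonneg ha] at h
      rw [max_eq_right (by linarith), min_eq_left (by linarith), add_zero,
        abs_of_nonneg (by linarith), abs_of_nonneg ha]
      linarith
    · rw [abs_of_nonpos ha] at h
      rw [max_eq_left (by linarith), min_eq_right (by linarith), zero_add,
        abs_of_nonpos (by linarith), abs_of_nonpos ha]
      linarith
  · obtain ⟨h₁, h₂⟩ := abs_le.mp (not_lt.mp h)
    rw [max_eq_left (by linarith), min_eq_left (by linarith)]
    simp

@[simp]
lemma etaS_zero_right (a : ℝ) : etaS a 0 = a := by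
  simp only [etaS, sub_zero, add_zero]
  rcases le_total a 0 with h | h
  · rw [max_eq_left h, min_eq_right h, zero_add]
  · rw [max_eq_right h, min_eq_left h, add_zero]

@[simp]
lemma etaH_zero_right (a : ℝ) : etaH a 0 = a := by
  unfold etaH
  split_ifs with h
  · rfl
  · exact (abs_nonpos_iff.mp (not_lt.mp h)).symm

section Parseval

variable {Ω ι : Type*} [MeasurableSpace Ω] {μ : Measure Ω} [DecidableEq ι]
  {p : ι → Ω → ℝ}

lemma integrable_mul_of_orthonormal (hpm : ∀ i, AEStronglyMeasurable (p i) μ)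
    (hL2 : ∀ i k, ∫ y, p i y * p k y ∂μ = if i = k then (1 : ℝ) else 0) (i k : ι) :
    Integrable (fun y => p i y * p k y) μ := by
  -- `∫ p_i² = 1 ≠ 0` rules out the junk value of a non-integrable integral.
  have hmemLp : ∀ i, MemLp (p i) 2 μ := fun i =>
    (memLp_two_iff_integrable_sq (hpm i)).mpr <| by
      simpa only [sq] using Integrable.of_integral_ne_zero (by simp [hL2 i i])
  exact (hmemLp i).integrable_mul (hmemLp k)

lemma integral_sq_sum_mul_of_orthonormal [Fintype ι] (hpm : ∀ i, AEStronglyMeasurable (p i) μ)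
    (hL2 : ∀ i k, ∫ y, p i y * p k y ∂μ = if i = k then (1 : ℝ) else 0) (c : ι → ℝ) :
    ∫ y, (∑ i, c i * p i y) ^ 2 ∂μ = ∑ i, c i ^ 2 := by
  have hint := integrable_mul_of_orthonormal hpm hL2
  have hexpand : ∀ y, (∑ i, c i * p i y) ^ 2 = ∑ i, ∑ k, c i * c k * (p i y * p k y) := fun y => by
    rw [sq, Finset.sum_mul_sum]
    exact Finset.sum_congr rfl fun i _ => Finset.sum_congr rfl fun k _ => by ring
  simp_rw [hexpand]
  rw [integral_finsetSum _ fun i _ => integrable_finsetSum _ fun k _ => (hint i k).const_mul _]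
  refine Finset.sum_congr rfl fun i _ => ?_
  rw [integral_finsetSum _ fun k _ => (hint i k).const_mul _]
  simp_rw [integral_const_mul, hL2]
  simp [sq]

lemma norm2_sum_mul_le_of_abs_le [Fintype ι] (hpm : ∀ i, AEStronglyMeasurable (p i) μ)
    (hL2 : ∀ i k, ∫ y, p i y * p k y ∂μ = if i = k then (1 : ℝ) else 0) {c c' : ι → ℝ}
    (hcc' : ∀ i, |c i| ≤ |c' i|) :
    norm2 μ (fun y => ∑ i, c i * p i y) ≤ norm2 μ (fun y => ∑ i, c' i * p i y) := by
  unfold norm2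
  rw [integral_sq_sum_mul_of_orthonormal hpm hL2, integral_sq_sum_mul_of_orthonormal hpm hL2]
  exact Real.sqrt_le_sqrt <| Finset.sum_le_sum fun i _ => sq_le_sq.mpr (hcc' i)

end Parseval

theorem lasso_HTH_hyper_norm_comparison_general {Ω : Type*} [MeasurableSpace Ω]
    (μ : Measure Ω)
    {N d : ℕ}
    (x : Fin N → Ω) (w : Fin N → ℝ)
    (p : Fin d → Ω → ℝ) (hpm : ∀ ℓ, Measurable (p ℓ))
    (hL2 : ∀ i k : Fin d, ∫ y, p i y * p k y ∂μ = if i = k then (1 : ℝ) else 0)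
    (f : Ω → ℝ)
    (lam : ℝ) (hlam : 0 ≤ lam) :
    (norm2 μ (lassoHyper x w p lam f) ≤ norm2 μ (HTH x w p lam f)
        ∧ norm2 μ (HTH x w p lam f) ≤ norm2 μ (hyper x w p f))
      ∧ (lam = 0 →
          norm2 μ (lassoHyper x w p lam f) = norm2 μ (HTH x w p lam f)
            ∧ norm2 μ (HTH x w p lam f) = norm2 μ (hyper x w p f)) := by
  have hpm' : ∀ ℓ, AEStronglyMeasurable (p ℓ) μ := fun ℓ => (hpm ℓ).aestronglyMeasurable
  refine ⟨⟨norm2_sum_mul_le_of_abs_le hpm' hL2 fun ℓ => abs_etaS_le_abs_etaH _ hlam,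
    norm2_sum_mul_le_of_abs_le hpm' hL2 fun ℓ => abs_etaH_le _ _⟩, ?_⟩
  rintro rfl
  have hlasso : lassoHyper x w p 0 f = hyper x w p f := by
    funext y; simp only [lassoHyper, hyper, etaS_zero_right]
  have hHTH : HTH x w p 0 f = hyper x w p f := by
    funext y; simp only [HTH, hyper, etaH_zero_right]
  rw [hlasso, hHTH]
  exact ⟨rfl, rfl⟩

/-- comparison of `L₂` norms,
`‖L_L^{λ,S} f‖₂ ≤ ‖H_L^λ f‖₂ ≤ ‖L_L f‖₂`, with equalities when `λ = 0`. -/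
theorem lasso_HTH_hyper_norm_comparison {Ω : Type*} [MeasurableSpace Ω]
    (μ : Measure Ω) [IsFiniteMeasure μ]
    {N d : ℕ} (hN : 0 < N) (hd : 0 < d)
    (x : Fin N → Ω) (w : Fin N → ℝ) (hw : ∀ j, 0 < w j)
    (p : Fin d → Ω → ℝ) (hpm : ∀ ℓ, Measurable (p ℓ))
    (hL2 : ∀ i k : Fin d, ∫ y, p i y * p k y ∂μ = if i = k then (1 : ℝ) else 0)
    (f : Ω → ℝ) (hfm : Measurable f) (hfb : ∃ M, ∀ y, |f y| ≤ M)
    (lam : ℝ) (hlam : 0 ≤ lam) :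
    (norm2 μ (lassoHyper x w p lam f) ≤ norm2 μ (HTH x w p lam f)
        ∧ norm2 μ (HTH x w p lam f) ≤ norm2 μ (hyper x w p f))
      ∧ (lam = 0 →
          norm2 μ (lassoHyper x w p lam f) = norm2 μ (HTH x w p lam f)
            ∧ norm2 μ (HTH x w p lam f) = norm2 μ (hyper x w p f)) :=
  lasso_HTH_hyper_norm_comparison_general μ x w p hpm hL2 f lam hlam
end
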